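/- Under the stated setting, the conditional expectation minimizes the ambient-diffusion objective over all 𝒢-measurable predictors: for every function H : Ω → ℝⁿ that is 𝒢-measurable and square-integrable, ∫_Ω ‖A(ω)·H(ω) − A(ω)·X(ω)‖² dμ(ω) ≥ ∫_Ω ‖A(ω)·G(ω) − A(ω)·X(ω)‖² dμ(ω), i.e. G = μ[X | 𝒢] attains the minimum of J(H) = E‖A H − A X‖². -/

import Mathlib

set_option maxHeartbeats 1000000


open MeasureTheory

section Helpers
variable {Ω : Type*} {m m0 : MeasurableSpace Ω} {μ : Measure Ω}

lemma memℒp_two_integrable_mul {f g : Ω → ℝ} (hf : MemLp f 2 μ) (hg : MemLp g 2 μ) :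
    Integrable (fun ω => f ω * g ω) μ := by
  have h : MemLp (g • f) 1 μ :=
    hf.smul hg
  have := memLp_one_iff_integrable.mp h
  simpa [Pi.smul_apply', smul_eq_mul, mul_comm, Pi.mul_def] using this

lemma memℒp_two_condexp {E : Type*} [NormedAddCommGroup E] [InnerProductSpace ℝ E]
    [CompleteSpace E] (hm : m ≤ m0) [IsFiniteMeasure μ] {f : Ω → E} (hf : MemLp f 2 μ) :
    MemLp (μ[f|m]) 2 μ := by
  have hae : (condExpL2 E ℝ hm (hf.toLp f) : Ω → E) =ᵐ[μ] μ[f|m] := by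
    refine ae_eq_condExp_of_forall_setIntegral_eq hm (hf.integrable one_le_two) ?_ ?_ ?_
    · intro s _ _
      exact (integrable_condExpL2_of_isFiniteMeasure hm).integrableOn
    · intro s hs hμs
      rw [integral_condExpL2_eq hm (hf.toLp f) hs hμs.ne]
      exact setIntegral_congr_ae (hm s hs) ((hf.coeFn_toLp).mono fun x hx _ => hx)
    · exact aestronglyMeasurable_condExpL2 hm _
  exact (Lp.memLp _).ae_eq hae

lemma condexp_comp_clm {E F : Type*} [NormedAddCommGroup E] [NormedSpace ℝ E] [CompleteSpace E]
    [NormedAddCommGroup F] [NormedSpace ℝ F] [CompleteSpace F]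
    (hm : m ≤ m0) [IsFiniteMeasure μ] (T : E →L[ℝ] F) {f : Ω → E} (hf : Integrable f μ) :
    (μ[fun ω => T (f ω)|m]) =ᵐ[μ] fun ω => T ((μ[f|m]) ω) := by
  refine (ae_eq_condExp_of_forall_setIntegral_eq hm (T.integrable_comp hf) ?_ ?_ ?_).symm
  · intro s _ _
    exact (T.integrable_comp integrable_condExp).integrableOn
  · intro s hs _
    rw [T.integral_comp_comm integrable_condExp.integrableOn,
      setIntegral_condExp hm hf hs, T.integral_comp_comm hf.integrableOn]
  · exact (T.continuous.comp_stronglyMeasurable stronglyMeasurable_condExp).aestronglyMeasurable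

lemma integral_mul_condexp_right (hm : m ≤ m0) [IsFiniteMeasure μ] {f x : Ω → ℝ}
    (hfm : StronglyMeasurable[m] f) (hf2 : MemLp f 2 μ) (hx2 : MemLp x 2 μ) :
    ∫ ω, f ω * x ω ∂μ = ∫ ω, f ω * (μ[x|m]) ω ∂μ := by
  have hfx : Integrable (f * x) μ := memℒp_two_integrable_mul hf2 hx2
  have hx1 : Integrable x μ := hx2.integrable one_le_two
  have h := condExp_mul_of_stronglyMeasurable_left hfm hfx hx1
  calc ∫ ω, f ω * x ω ∂μ = ∫ ω, (f * x) ω ∂μ := rfl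
    _ = ∫ ω, (μ[f * x|m]) ω ∂μ := (integral_condExp hm).symm
    _ = ∫ ω, f ω * (μ[x|m]) ω ∂μ := integral_congr_ae (h.mono fun ω hω => hω)

lemma euclid_abs_apply_le_norm {n : ℕ} (y : EuclideanSpace ℝ (Fin n)) (j : Fin n) :
    |y j| ≤ ‖y‖ := by
  rw [EuclideanSpace.norm_eq]
  have h : (y j) ^ 2 ≤ ∑ i, ‖y i‖ ^ 2 := by
    simpa [Real.norm_eq_abs, sq_abs] using
      Finset.single_le_sum (f := fun i => ‖y i‖ ^ 2)
        (fun k _ => sq_nonneg (‖y k‖)) (Finset.mem_univ j)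
  calc |y j| = Real.sqrt ((y j) ^ 2) := (Real.sqrt_sq_eq_abs _).symm
    _ ≤ _ := Real.sqrt_le_sqrt h

lemma euclid_norm_sq_eq {n : ℕ} (w : Fin n → ℝ) :
    ‖(WithLp.equiv 2 (Fin n → ℝ)).symm w‖ ^ 2 = ∑ i, (w i) ^ 2 := by
  rw [EuclideanSpace.norm_eq]
  rw [Real.sq_sqrt (Finset.sum_nonneg fun i _ => sq_nonneg _)]
  simp [Real.norm_eq_abs, sq_abs]

end Helpers

/-- **The conditional expectation minimizes the ambient-diffusion objective.**
Let `(Ω, ℱ, μ)` be a probability space, `𝒢 ≤ ℱ` a sub-σ-algebra, `X` a measurable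
square-integrable `ℝⁿ`-valued signal, `A` a measurable matrix-valued map with uniformly
bounded entries, `G := μ[X | 𝒢]`, and `ℋ := 𝒢 ⊔ σ(A)`.  Under the conditional-independence
condition `μ[X | ℋ] =ᵐ μ[X | 𝒢]`, for every `𝒢`-measurable square-integrable `H : Ω → ℝⁿ`:
`∫ ‖A·H − A·X‖² dμ ≥ ∫ ‖A·G − A·X‖² dμ`, i.e. `G = μ[X | 𝒢]` minimizes
`J(H) = E‖A H − A X‖²` over `𝒢`-measurable predictors. -/
theorem ambient_condexp_minimizes
    {Ω : Type*} {𝒢 : MeasurableSpace Ω} {ℱ : MeasurableSpace Ω} {μ : Measure Ω} [IsProbabilityMeasure μ]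
    (h𝒢 : 𝒢 ≤ ℱ)
    {n : ℕ}
    (X : Ω → EuclideanSpace ℝ (Fin n)) (hX : Measurable X) (hX2 : MemLp X 2 μ)
    (A : Ω → Matrix (Fin n) (Fin n) ℝ)
    (hA : Measurable (fun ω => Matrix.of.symm (A ω)))
    (C : ℝ) (hAC : ∀ ω i j, |A ω i j| ≤ C)
    (G : Ω → EuclideanSpace ℝ (Fin n)) (hG : G = μ[X | 𝒢])
    (hCI : μ[X | 𝒢 ⊔ MeasurableSpace.comap (fun ω => Matrix.of.symm (A ω)) inferInstance]
            =ᵐ[μ] μ[X | 𝒢])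
    (H : Ω → EuclideanSpace ℝ (Fin n)) (hH : Measurable[𝒢] H) (hH2 : MemLp H 2 μ) :
    ∫ ω, ‖(WithLp.equiv 2 (Fin n → ℝ)).symm
            ((A ω).mulVec (H ω) - (A ω).mulVec (X ω))‖ ^ 2 ∂μ
      ≥ ∫ ω, ‖(WithLp.equiv 2 (Fin n → ℝ)).symm
            ((A ω).mulVec (G ω) - (A ω).mulVec (X ω))‖ ^ 2 ∂μ := by
  classical
  set mH := 𝒢 ⊔ MeasurableSpace.comap (fun ω => Matrix.of.symm (A ω)) inferInstance with hmHdef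
  have hmH : mH ≤ ℱ := sup_le h𝒢 hA.comap_le
  have h𝒢mH : 𝒢 ≤ mH := le_sup_left
  set B := max C 0 with hBdef
  have hB0 : 0 ≤ B := le_max_right _ _
  have hAB : ∀ ω i j, |A ω i j| ≤ B := fun ω i j => (hAC ω i j).trans (le_max_left _ _)
  -- measurability of matrix entries
  have hAF : Measurable[ℱ] (fun ω => Matrix.of.symm (A ω)) := hA
  have hAm : ∀ i j, Measurable[ℱ] fun ω => A ω i j := fun i j =>
    (measurable_pi_apply j).comp ((measurable_pi_apply i).comp hAF)
  have hAmH : ∀ i j, Measurable[mH] fun ω => A ω i j := fun i j =>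
    (measurable_pi_apply j).comp ((measurable_pi_apply i).comp (Measurable.of_comap_le (le_sup_right : MeasurableSpace.comap (fun ω => Matrix.of.symm (A ω)) inferInstance ≤ mH)))
  -- measurability of the various vector functions
  have hGsm : StronglyMeasurable[𝒢] G := hG ▸ stronglyMeasurable_condExp
  have hGm : Measurable[𝒢] G := hGsm.measurable
  have hHmF : Measurable[ℱ] H := hH.mono h𝒢 le_rfl
  have hXmF : Measurable[ℱ] X := hX
  have hGmF : Measurable[ℱ] G := hGm.mono h𝒢 le_rfl
  -- Memℒp facts
  have hG2 : MemLp G 2 μ := hG ▸ memℒp_two_condexp h𝒢 hX2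
  have hXk2 : ∀ k, MemLp (fun ω => X ω k) 2 μ := fun k =>
    (EuclideanSpace.proj k (𝕜 := ℝ)).comp_memLp' hX2
  have hGk2 : ∀ k, MemLp (fun ω => G ω k) 2 μ := fun k =>
    (EuclideanSpace.proj k (𝕜 := ℝ)).comp_memLp' hG2
  -- a matrix-vector product component is measurable
  have hmulVec : ∀ {m' : MeasurableSpace Ω},
      (∀ i j, Measurable[m'] fun ω => A ω i j) →
      ∀ {Y : Ω → EuclideanSpace ℝ (Fin n)}, Measurable[m'] Y →
      ∀ i, Measurable[m'] fun ω => (A ω).mulVec (Y ω) i := by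
    intro m' hA' Y hY i
    simp only [Matrix.mulVec, dotProduct]
    exact Finset.measurable_sum _ fun j _ =>
      (hA' i j).mul ((measurable_pi_apply j).comp ((WithLp.measurable_ofLp _ _).comp hY))
  -- a matrix-vector product component is in L²
  have hmulVec2 : ∀ {Y : Ω → EuclideanSpace ℝ (Fin n)},
      MemLp Y 2 μ → Measurable[ℱ] Y →
      ∀ i, MemLp (fun ω => (A ω).mulVec (Y ω) i) 2 μ := by
    intro Y hY2 hYm i
    refine MemLp.of_le_mul (c := n * B) hY2.norm
      ((hmulVec (m' := ℱ) hAm hYm i).aestronglyMeasurable) ?_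
    filter_upwards with ω
    have h1 : |(A ω).mulVec (Y ω) i| ≤ ∑ _j : Fin n, B * ‖Y ω‖ := by
      rw [Matrix.mulVec, dotProduct]
      refine (Finset.abs_sum_le_sum_abs _ _).trans (Finset.sum_le_sum fun j _ => ?_)
      rw [abs_mul]
      exact mul_le_mul (hAB ω i j) (euclid_abs_apply_le_norm (Y ω) j)
        (abs_nonneg _) hB0
    calc ‖(A ω).mulVec (Y ω) i‖ = |(A ω).mulVec (Y ω) i| := Real.norm_eq_abs _
      _ ≤ ∑ _j : Fin n, B * ‖Y ω‖ := h1
      _ = ↑n * B * ‖‖Y ω‖‖ := by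
          simp [Finset.sum_const, Finset.card_univ, nsmul_eq_mul, mul_assoc]
  -- the two component families
  set u : Fin n → Ω → ℝ := fun i ω => (A ω).mulVec (H ω) i - (A ω).mulVec (G ω) i with hudef
  set v : Fin n → Ω → ℝ := fun i ω => (A ω).mulVec (G ω) i - (A ω).mulVec (X ω) i with hvdef
  have hu2 : ∀ i, MemLp (u i) 2 μ := fun i =>
    (hmulVec2 hH2 hHmF i).sub (hmulVec2 hG2 hGmF i)
  have hv2 : ∀ i, MemLp (v i) 2 μ := fun i =>
    (hmulVec2 hG2 hGmF i).sub (hmulVec2 hX2 hXmF i)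
  have humH : ∀ i, Measurable[mH] (u i) := fun i =>
    (hmulVec (m' := mH) hAmH (hH.mono h𝒢mH le_rfl) i).sub
      (hmulVec (m' := mH) hAmH (hGm.mono h𝒢mH le_rfl) i)
  -- the conditional expectation of components of X given mH is G's component
  have hcondk : ∀ k, μ[(fun ω => X ω k)|mH] =ᵐ[μ] fun ω => G ω k := by
    intro k
    have h1 := condexp_comp_clm hmH (EuclideanSpace.proj k (𝕜 := ℝ))
      (hX2.integrable one_le_two)
    have h2 : (fun ω => (EuclideanSpace.proj k (𝕜 := ℝ)) ((μ[X|mH]) ω)) =ᵐ[μ]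
        fun ω => G ω k := by
      filter_upwards [hCI] with ω hω
      show (μ[X|mH]) ω k = G ω k
      rw [hω, hG]
    exact h1.trans h2
  -- the cross terms vanish
  have hzero : ∀ i, ∫ ω, u i ω * v i ω ∂μ = 0 := by
    intro i
    have hf2 : ∀ k, MemLp (fun ω => u i ω * A ω i k) 2 μ := by
      intro k
      refine MemLp.of_le_mul (c := B) (hu2 i)
        (((humH i).mono hmH le_rfl).mul (hAm i k)).aestronglyMeasurable ?_
      filter_upwards with ω
      rw [Real.norm_eq_abs, Real.norm_eq_abs, abs_mul, mul_comm]
      exact mul_le_mul_of_nonneg_right (hAB ω i k) (abs_nonneg _)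
    have hfsm : ∀ k, StronglyMeasurable[mH] fun ω => u i ω * A ω i k := fun k =>
      ((humH i).mul (hAmH i k)).stronglyMeasurable
    have hterm : ∀ k, ∫ ω, ((u i ω * A ω i k) * G ω k - (u i ω * A ω i k) * X ω k) ∂μ = 0 := by
      intro k
      rw [integral_sub (memℒp_two_integrable_mul (hf2 k) (hGk2 k))
        (memℒp_two_integrable_mul (hf2 k) (hXk2 k)), sub_eq_zero]
      rw [integral_mul_condexp_right hmH (hfsm k) (hf2 k) (hXk2 k)]
      exact (integral_congr_ae ((hcondk k).mono fun ω hω => by rw [hω])).symm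
    have hexp : ∀ ω, u i ω * v i ω =
        ∑ k, ((u i ω * A ω i k) * G ω k - (u i ω * A ω i k) * X ω k) := by
      intro ω
      have hv' : v i ω = ∑ k, (A ω i k * G ω k - A ω i k * X ω k) := by
        simp only [hvdef, Matrix.mulVec, dotProduct, Finset.sum_sub_distrib]
      rw [hv', Finset.mul_sum]
      exact Finset.sum_congr rfl fun k _ => by ring
    calc ∫ ω, u i ω * v i ω ∂μ
        = ∫ ω, ∑ k, ((u i ω * A ω i k) * G ω k - (u i ω * A ω i k) * X ω k) ∂μ :=
          integral_congr_ae (Filter.Eventually.of_forall hexp)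
      _ = ∑ k, ∫ ω, ((u i ω * A ω i k) * G ω k - (u i ω * A ω i k) * X ω k) ∂μ :=
          integral_finset_sum _ fun k _ =>
            (memℒp_two_integrable_mul (hf2 k) (hGk2 k)).sub
              (memℒp_two_integrable_mul (hf2 k) (hXk2 k))
      _ = 0 := by simp [hterm]
  -- integrability of the pieces
  have hIv : Integrable (fun ω => ∑ i, (v i ω) ^ 2) μ :=
    integrable_finset_sum _ fun i _ => by
      simpa [pow_two] using memℒp_two_integrable_mul (hv2 i) (hv2 i)
  have hIu : Integrable (fun ω => ∑ i, (u i ω) ^ 2) μ :=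
    integrable_finset_sum _ fun i _ => by
      simpa [pow_two] using memℒp_two_integrable_mul (hu2 i) (hu2 i)
  have hIuv : Integrable (fun ω => ∑ i, u i ω * v i ω) μ :=
    integrable_finset_sum _ fun i _ => memℒp_two_integrable_mul (hu2 i) (hv2 i)
  -- pointwise identities
  have hEq1 : ∀ ω, ‖(WithLp.equiv 2 (Fin n → ℝ)).symm
      ((A ω).mulVec (H ω) - (A ω).mulVec (X ω))‖ ^ 2
      = (∑ i, (v i ω) ^ 2) + ((∑ i, (u i ω) ^ 2) + 2 * ∑ i, u i ω * v i ω) := by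
    intro ω
    rw [euclid_norm_sq_eq, Finset.mul_sum, ← Finset.sum_add_distrib, ← Finset.sum_add_distrib]
    refine Finset.sum_congr rfl fun i _ => ?_
    have : ((A ω).mulVec (H ω) - (A ω).mulVec (X ω)) i
        = u i ω + v i ω := by
      simp only [Pi.sub_apply, hudef, hvdef]; ring
    rw [this]; ring
  have hEq2 : ∀ ω, ‖(WithLp.equiv 2 (Fin n → ℝ)).symm
      ((A ω).mulVec (G ω) - (A ω).mulVec (X ω))‖ ^ 2 = ∑ i, (v i ω) ^ 2 := by
    intro ω
    rw [euclid_norm_sq_eq]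
    exact Finset.sum_congr rfl fun i _ => by simp only [Pi.sub_apply, hvdef]
  -- put everything together
  have hIrest : Integrable (fun ω => (∑ i, (u i ω) ^ 2) + 2 * ∑ i, u i ω * v i ω) μ :=
    hIu.add (hIuv.const_mul 2)
  have huv0 : ∫ ω, ∑ i, u i ω * v i ω ∂μ = 0 := by
    rw [integral_finset_sum _ fun i _ => memℒp_two_integrable_mul (hu2 i) (hv2 i)]
    simp [hzero]
  rw [ge_iff_le, integral_congr_ae (Filter.Eventually.of_forall hEq1),
    integral_congr_ae (Filter.Eventually.of_forall hEq2),
    integral_add hIv hIrest]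
  have hrest0 : 0 ≤ ∫ ω, ((∑ i, (u i ω) ^ 2) + 2 * ∑ i, u i ω * v i ω) ∂μ := by
    have h2 : Integrable (fun ω => 2 * ∑ i, u i ω * v i ω) μ := hIuv.const_mul 2
    rw [integral_add hIu h2, integral_const_mul, huv0, mul_zero, add_zero]
    exact integral_nonneg fun ω => Finset.sum_nonneg fun i _ => sq_nonneg _
  linarith
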